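/- Let α₀ ∈ ℝ and define f : {(w₋, w, w₊) ∈ ℝ³ : w₊ − w₋ + 2α₀ ≠ 0} → ℝ by f(w₋, w, w₊) := 4(w − w₋ + α₀)(w − w₊ − α₀)/(w₊ − w₋ + 2α₀). Then for every n ∈ ℤ and every (w₋, w, w₊) with w₊ − w₋ + 2α₀ ≠ 0, the identity (w₋ + α₀(n−1))·∂₁f + (w + α₀n)·∂₂f + (w₊ + α₀(n+1))·∂₃f = f holds, where ∂ᵢf is the partial derivative of f in its i-th argument evaluated at (w₋, w, w₊). Equivalently, the non-isospectral flow du_n/dσ₀ = u_n + α₀n commutes with the Volterra-type flow du_n/dε₀ = f(u_{n−1}, u_n, u_{n+1}). -/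

import Mathlib

/-!
In the variables `x = w - wm + α₀` and `y = wp - w + α₀` the characteristic is
`f = -4xy/(x + y)`, homogeneous of degree one. The vector field
`(wm + α₀(n-1), w + α₀n, wp + α₀(n+1))` maps `x ↦ x` and `y ↦ y`, so it is the Euler field
of `(x, y)`, and Euler's identity for homogeneous functions gives the claim.
-/

noncomputable def volterraChar (α₀ wm w wp : ℝ) : ℝ :=
  4 * (w - wm + α₀) * (w - wp - α₀) / (wp - wm + 2 * α₀)

section

variable {α₀ wm w wp : ℝ}

theorem hasDerivAt_volterraChar_left (h : wp - wm + 2 * α₀ ≠ 0) :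
    HasDerivAt (fun t => volterraChar α₀ t w wp)
      (4 * (wp - w + α₀) ^ 2 / (wp - wm + 2 * α₀) ^ 2) wm := by
  have hnum : HasDerivAt (fun t => 4 * (w - t + α₀) * (w - wp - α₀))
      (4 * -1 * (w - wp - α₀)) wm :=
    ((((hasDerivAt_id wm).const_sub w).add_const α₀).const_mul 4).mul_const _
  have hden : HasDerivAt (fun t => wp - t + 2 * α₀) (-1) wm :=
    ((hasDerivAt_id wm).const_sub wp).add_const _
  refine (hnum.div hden h).congr_deriv ?_
  field_simp
  ring

theorem hasDerivAt_volterraChar_middle :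
    HasDerivAt (fun t => volterraChar α₀ wm t wp)
      (4 * ((w - wm + α₀) - (wp - w + α₀)) / (wp - wm + 2 * α₀)) w := by
  have hx : HasDerivAt (fun t => 4 * (t - wm + α₀)) (4 * 1) w :=
    (((hasDerivAt_id w).sub_const wm).add_const α₀).const_mul 4
  have hy : HasDerivAt (fun t => t - wp - α₀) 1 w :=
    ((hasDerivAt_id w).sub_const wp).sub_const α₀
  refine ((hx.mul hy).div_const (wp - wm + 2 * α₀)).congr_deriv ?_
  ring

theorem hasDerivAt_volterraChar_right (h : wp - wm + 2 * α₀ ≠ 0) :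
    HasDerivAt (fun t => volterraChar α₀ wm w t)
      (-4 * (w - wm + α₀) ^ 2 / (wp - wm + 2 * α₀) ^ 2) wp := by
  have hnum : HasDerivAt (fun t => 4 * (w - wm + α₀) * (w - t - α₀))
      (4 * (w - wm + α₀) * -1) wp :=
    (((hasDerivAt_id wp).const_sub w).sub_const α₀).const_mul _
  have hden : HasDerivAt (fun t => t - wm + 2 * α₀) 1 wp :=
    ((hasDerivAt_id wp).sub_const wm).add_const _
  refine (hnum.div hden h).congr_deriv ?_
  field_simp
  ring

end

theorem volterra_euler_identity {a x y : ℝ} (h : x + y ≠ 0) :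
    a * (4 * y ^ 2 / (x + y) ^ 2) + (a + x) * (4 * (x - y) / (x + y)) +
      (a + x + y) * (-4 * x ^ 2 / (x + y) ^ 2) = -4 * x * y / (x + y) := by
  field_simp
  ring

/-- wherever `wp − wm + 2α₀ ≠ 0` one has, for every `n ∈ ℤ`, the
identity `(wm + α₀(n−1)) ∂₁f + (w + α₀ n) ∂₂f + (wp + α₀(n+1)) ∂₃f = f`;
equivalently, the non-isospectral flow `du_n/dσ₀ = u_n + α₀ n` commutes with the
Volterra-type flow `du_n/dε₀ = f(u_{n−1}, u_n, u_{n+1})`. -/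
theorem nonisospectral_commutes_with_volterra (α₀ : ℝ) (n : ℤ) (wm w wp : ℝ)
    (h : wp - wm + 2 * α₀ ≠ 0) :
    (wm + α₀ * ((n : ℝ) - 1)) * deriv (fun t => volterraChar α₀ t w wp) wm +
        (w + α₀ * (n : ℝ)) * deriv (fun t => volterraChar α₀ wm t wp) w +
        (wp + α₀ * ((n : ℝ) + 1)) * deriv (fun t => volterraChar α₀ wm w t) wp =
      volterraChar α₀ wm w wp := by
  have hd : (w - wm + α₀) + (wp - w + α₀) ≠ 0 := by convert h using 1; ring
  rw [(hasDerivAt_volterraChar_left h).deriv, hasDerivAt_volterraChar_middle.deriv,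
    (hasDerivAt_volterraChar_right h).deriv, volterraChar]
  linear_combination volterra_euler_identity (a := wm + α₀ * ((n : ℝ) - 1)) hd
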